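/- arXiv:1201.2530 — 11 statements merged into one kernel-verified Lean document; each statement's English description precedes it below -/
import Mathlib

section
/- Let A be a set with at least two elements and let f : A³ → A be the operation satisfying f(x,x,y) = f(x,y,x) = f(y,x,x) = x for all x,y ∈ A and f(a,b,c) = a whenever a,b,c ∈ A are pairwise distinct. Then every binary term operation t of the algebra (A; f) is a projection: either t(x,y) = x for all x,y ∈ A, or t(x,y) = y for all x,y ∈ A. -/
/-- Binary term operations of an algebra with one ternary basic operation `f`. -/
inductive IsBinaryTerm {A : Type*} (f : A → A → A → A) : (A → A → A) → Prop
  | proj1 : IsBinaryTerm f (fun x _ => x)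
  | proj2 : IsBinaryTerm f (fun _ y => y)
  | comp {t₁ t₂ t₃ : A → A → A} :
      IsBinaryTerm f t₁ → IsBinaryTerm f t₂ → IsBinaryTerm f t₃ →
      IsBinaryTerm f (fun x y => f (t₁ x y) (t₂ x y) (t₃ x y))

theorem binary_terms_are_projections {A : Type*} (hA : ∃ a b : A, a ≠ b)
    (f : A → A → A → A)
    (hmaj : ∀ x y : A, f x x y = x ∧ f x y x = x ∧ f y x x = x)
    (hdist : ∀ a b c : A, a ≠ b → b ≠ c → c ≠ a → f a b c = a)
    (t : A → A → A) (ht : IsBinaryTerm f t) :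
    (∀ x y : A, t x y = x) ∨ (∀ x y : A, t x y = y) := by
  induction ht with
  | proj1 => exact Or.inl fun x y => rfl
  | proj2 => exact Or.inr fun x y => rfl
  | comp h1 h2 h3 ih1 ih2 ih3 =>
    rcases ih1 with ih1 | ih1 <;> rcases ih2 with ih2 | ih2 <;> rcases ih3 with ih3 | ih3 <;>
      [left; left; left; right; left; right; right; right] <;>
      intro x y <;> simp only [ih1, ih2, ih3] <;>
      first
        | exact (hmaj x y).1
        | exact (hmaj x y).2.1
        | exact (hmaj x y).2.2
        | exact (hmaj y x).1
        | exact (hmaj y x).2.1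
        | exact (hmaj y x).2.2
        | exact (hmaj x x).1
        | exact (hmaj y y).1
end

section
/- Let A be a set with at least two elements and let f : A³ → A be the operation satisfying f(x,x,y) = f(x,y,x) = f(y,x,x) = x for all x,y ∈ A and f(a,b,c) = a whenever a,b,c ∈ A are pairwise distinct. Then every ternary term operation p of the algebra (A; f) satisfies one of the following: p(x,y,z) = x for all x,y,z; or p(x,y,z) = y for all x,y,z; or p(x,y,z) = z for all x,y,z; or p is a majority operation, i.e. p(x,x,y) = p(x,y,x) = p(y,x,x) = x for all x,y ∈ A. -/
/-- Ternary term operations of an algebra with one ternary basic operation `f`. -/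
inductive IsTernaryTerm {A : Type*} (f : A → A → A → A) : (A → A → A → A) → Prop
  | proj1 : IsTernaryTerm f (fun x _ _ => x)
  | proj2 : IsTernaryTerm f (fun _ y _ => y)
  | proj3 : IsTernaryTerm f (fun _ _ z => z)
  | comp {p₁ p₂ p₃ : A → A → A → A} :
      IsTernaryTerm f p₁ → IsTernaryTerm f p₂ → IsTernaryTerm f p₃ →
      IsTernaryTerm f (fun x y z => f (p₁ x y z) (p₂ x y z) (p₃ x y z))

theorem ternary_terms_projection_or_majority {A : Type*} (hA : ∃ a b : A, a ≠ b)
    (f : A → A → A → A)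
    (hmaj : ∀ x y : A, f x x y = x ∧ f x y x = x ∧ f y x x = x)
    (hdist : ∀ a b c : A, a ≠ b → b ≠ c → c ≠ a → f a b c = a)
    (p : A → A → A → A) (hp : IsTernaryTerm f p) :
    (∀ x y z : A, p x y z = x) ∨ (∀ x y z : A, p x y z = y) ∨
    (∀ x y z : A, p x y z = z) ∨
    (∀ x y : A, p x x y = x ∧ p x y x = x ∧ p y x x = x) := by
  have ha : ∀ x y : A, f x x y = x := fun x y => (hmaj x y).1
  have hb : ∀ x y : A, f x y x = x := fun x y => (hmaj x y).2.1
  have hc : ∀ x y : A, f y x x = x := fun x y => (hmaj x y).2.2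
  induction hp with
  | proj1 => exact Or.inl fun _ _ _ => rfl
  | proj2 => exact Or.inr (Or.inl fun _ _ _ => rfl)
  | proj3 => exact Or.inr (Or.inr (Or.inl fun _ _ _ => rfl))
  | comp hp1 hp2 hp3 ih1 ih2 ih3 =>
    rcases ih1 with h1|h1|h1|h1 <;> rcases ih2 with h2|h2|h2|h2 <;>
      rcases ih3 with h3|h3|h3|h3 <;>
    first
    | (left; intro x y z; simp only [h1, h2, h3, ha, hb, hc]; done)
    | (right; left; intro x y z; simp only [h1, h2, h3, ha, hb, hc]; done)
    | (right; right; left; intro x y z; simp only [h1, h2, h3, ha, hb, hc]; done)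
    | (right; right; right; intro x y; refine ⟨?_, ?_, ?_⟩ <;>
        (simp only [h1, h2, h3, ha, hb, hc]; done))
end

section
/- Let R be a ring with 1 and M a nontrivial left R-module (M has at least two elements). There do not exist coefficients α, β, γ, α', β', γ' ∈ R with α + β + γ = 1 and α' + β' + γ' = 1 such that the operations p(x,y,z) = α•x + β•y + γ•z and q(x,y,z) = α'•x + β'•y + γ'•z on M satisfy p(x,x,y) = p(x,y,y) and p(x,y,x) = q(x,x,y) = q(x,y,x) = q(y,x,x) for all x,y ∈ M. (Hence the system of identities p(x,x,y) ≈ p(x,y,y), p(x,y,x) ≈ q(x,x,y) ≈ q(x,y,x) ≈ q(y,x,x) fails in every full idempotent reduct of a nontrivial module, in particular over every finite ring.) -/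
theorem system2_fails_in_modules {R M : Type*} [Ring R] [AddCommGroup M] [Module R M]
    (hM : ∃ a b : M, a ≠ b) :
    ¬ ∃ α β γ α' β' γ' : R,
      α + β + γ = 1 ∧ α' + β' + γ' = 1 ∧
      (∀ x y : M,
        (α • x + β • x + γ • y = α • x + β • y + γ • y) ∧
        (α • x + β • y + γ • x = α' • x + β' • x + γ' • y) ∧
        (α' • x + β' • x + γ' • y = α' • x + β' • y + γ' • x) ∧
        (α' • x + β' • y + γ' • x = α' • y + β' • x + γ' • x)) := by
  rintro ⟨α, β, γ, α', β', γ', -, hsum', h⟩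
  obtain ⟨a, b, hab⟩ := hM
  suffices ∀ y : M, y = 0 from hab ((this a).trans (this b).symm)
  intro y
  -- At `x = 0` the identities become `β • y = 0` and `β • y = γ' • y = β' • y = α' • y`.
  obtain ⟨h₁, h₂, h₃, h₄⟩ := h 0 y
  simp only [smul_zero, zero_add, add_zero] at h₁ h₂ h₃ h₄
  have hβ : β • y = 0 := right_eq_add.mp h₁
  calc y = (α' + β' + γ') • y := by rw [hsum', one_smul]
    _ = 0 := by rw [add_smul, add_smul, ← h₄, ← h₃, ← h₂, hβ, add_zero, add_zero]
end

section
/- Let R be a ring with 1 and M a nontrivial left R-module (M has at least two elements). There do not exist coefficients α, β, γ, α', β', γ' ∈ R with α + β + γ = 1 and α' + β' + γ' = 1 such that the operations p(x,y,z) = α•x + β•y + γ•z and q(x,y,z) = α'•x + β'•y + γ'•z on M satisfy q(x,y,x) = x, p(x,y,y) = p(x,y,x), and p(x,x,y) = q(x,x,y) = q(y,x,x) for all x,y ∈ M. (Hence the system x ≈ q(x,y,x), p(x,y,y) ≈ p(x,y,x), p(x,x,y) ≈ q(x,x,y) ≈ q(y,x,x) fails in every full idempotent reduct of a nontrivial module,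 in particular over every finite ring.) -/
theorem system_newone_fails_in_modules {R M : Type*} [Ring R] [AddCommGroup M] [Module R M]
    (hM : ∃ a b : M, a ≠ b) :
    ¬ ∃ α β γ α' β' γ' : R,
      α + β + γ = 1 ∧ α' + β' + γ' = 1 ∧
      (∀ x y : M,
        (α' • x + β' • y + γ' • x = x) ∧
        (α • x + β • y + γ • y = α • x + β • y + γ • x) ∧
        (α • x + β • x + γ • y = α' • x + β' • x + γ' • y) ∧
        (α' • x + β' • x + γ' • y = α' • y + β' • x + γ' • x)) := by
  rintro ⟨α, β, γ, α', β', γ', hs, hs', h⟩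
  obtain ⟨a, b, hab⟩ := hM
  set m := a - b with hm
  have hm0 : m ≠ 0 := sub_ne_zero.mpr hab
  obtain ⟨h1, h2, h3, h4⟩ := h 0 m
  simp only [smul_zero, zero_add, add_zero] at h1 h2 h3 h4
  -- h1 : β' • m = 0, h2 : β • m + γ • m = β • m, h3 : γ • m = γ' • m, h4 : γ' • m = α' • m
  have hγ : γ • m = 0 := by
    have h2' : β • m + γ • m = β • m + 0 := by simpa using h2
    exact add_left_cancel h2'
  have hγ' : γ' • m = 0 := by rw [← h3, hγ]
  have hα' : α' • m = 0 := by rw [← h4, hγ']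
  have : (α' + β' + γ') • m = 0 := by
    rw [add_smul, add_smul, hα', h1, hγ']; simp
  rw [hs', one_smul] at this
  exact hm0 this
end

section
/- Let R be a ring with 1 and M a nontrivial left R-module (M has at least two elements). There do not exist coefficients α, β, γ, α', β', γ' ∈ R with α + β + γ = 1 and α' + β' + γ' = 1 such that the operations p(x,y,z) = α•x + β•y + γ•z and q(x,y,z) = α'•x + β'•y + γ'•z on M satisfy p(x,x,y) = x and p(x,y,x) = p(y,x,x) = q(y,x,x) = q(x,y,x) = q(x,x,y) for all x,y ∈ M. (Hence the system x ≈ p(x,x,y), p(x,y,x) ≈ p(y,x,x) ≈ q(y,x,x) ≈ q(x,y,x) ≈ q(x,x,y) fails in every full idempotent reduct of a nontrivial module, in particular over every finite ring.) -/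
theorem system3_fails_in_modules {R M : Type*} [Ring R] [AddCommGroup M] [Module R M]
    (hM : ∃ a b : M, a ≠ b) :
    ¬ ∃ α β γ α' β' γ' : R,
      α + β + γ = 1 ∧ α' + β' + γ' = 1 ∧
      (∀ x y : M,
        (α • x + β • x + γ • y = x) ∧
        (α • x + β • y + γ • x = α • y + β • x + γ • x) ∧
        (α • y + β • x + γ • x = α' • y + β' • x + γ' • x) ∧
        (α' • y + β' • x + γ' • x = α' • x + β' • y + γ' • x) ∧
        (α' • x + β' • y + γ' • x = α' • x + β' • x + γ' • y)) := by
  rintro ⟨α, β, γ, α', β', γ', h1, h2, h⟩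
  obtain ⟨a, b, hab⟩ := hM
  have hγ : ∀ m : M, γ • m = 0 := by
    intro m; have := (h 0 m).1; simpa using this
  have hβα : ∀ m : M, β • m = α • m := by
    intro m; have := (h 0 m).2.1; simpa using this
  have hαα' : ∀ m : M, α • m = α' • m := by
    intro m; have := (h 0 m).2.2.1; simpa using this
  have hα'β' : ∀ m : M, α' • m = β' • m := by
    intro m; have := (h 0 m).2.2.2.1; simpa using this
  have hβ'γ' : ∀ m : M, β' • m = γ' • m := by
    intro m; have := (h 0 m).2.2.2.2; simpa using this
  have key : ∀ m : M, m = 0 := by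
    intro m
    have e1 : α • m + β • m + γ • m = m := by
      rw [← add_smul, ← add_smul, h1, one_smul]
    have e2 : α' • m + β' • m + γ' • m = m := by
      rw [← add_smul, ← add_smul, h2, one_smul]
    rw [hγ, hβα, add_zero] at e1
    rw [← hα'β', ← hβ'γ', ← hα'β', ← hαα'] at e2
    -- e1 : α•m + α•m = m, e2 : α•m + α•m + α•m = m
    have hα0 : α • m = 0 := by
      have : (α • m + α • m) + α • m = (α • m + α • m) := by
        rw [e1] at e2 ⊢; exact e2
      simpa using this
    rw [hα0, add_zero] at e1
    exact e1.symm
  exact hab ((key a).trans (key b).symm)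
end

section
/- Let R be a ring with 1 and M a nontrivial left R-module (M has at least two elements). There do not exist coefficients α, β, γ, α', β', γ' ∈ R with α + β + γ = 1 and α' + β' + γ' = 1 such that the operations p(x,y,z) = α•x + β•y + γ•z and q(x,y,z) = α'•x + β'•y + γ'•z on M satisfy p(x,x,y) = p(x,y,y) = p(x,y,x) = q(x,x,y) = q(x,y,x) = q(y,x,x) for all x,y ∈ M. (Hence the system p(x,x,y) ≈ p(x,y,y) ≈ p(x,y,x) ≈ q(x,x,y) ≈ q(x,y,x) ≈ q(y,x,x) fails in every full idempotent reduct of a nontrivial module, in particular over every finite ring.) -/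
theorem system1_fails_in_modules {R M : Type*} [Ring R] [AddCommGroup M] [Module R M]
    (hM : ∃ a b : M, a ≠ b) :
    ¬ ∃ α β γ α' β' γ' : R,
      α + β + γ = 1 ∧ α' + β' + γ' = 1 ∧
      (∀ x y : M,
        (α • x + β • x + γ • y = α • x + β • y + γ • y) ∧
        (α • x + β • y + γ • y = α • x + β • y + γ • x) ∧
        (α • x + β • y + γ • x = α' • x + β' • x + γ' • y) ∧
        (α' • x + β' • x + γ' • y = α' • x + β' • y + γ' • x) ∧
        (α' • x + β' • y + γ' • x = α' • y + β' • x + γ' • x)) := by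
  rintro ⟨α, β, γ, α', β', γ', h1, h2, h⟩
  obtain ⟨a, b, hab⟩ := hM
  have key : ∀ m : M, m = 0 := by
    intro m
    obtain ⟨e1, e2, e3, e4, e5⟩ := h 0 m
    simp only [smul_zero, zero_add, add_zero] at e1 e2 e3 e4 e5
    -- e1 : γ • m = β • m + γ • m
    have hβ : β • m = 0 := by
      have h' : β • m + γ • m = 0 + γ • m := by rw [zero_add, ← e1]
      exact add_right_cancel h'
    -- e2 : β • m + γ • m = β • m
    have hγ : γ • m = 0 := by
      have h' : β • m + γ • m = β • m + 0 := by rw [add_zero, e2]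
      exact add_left_cancel h'
    -- e3 : β • m = γ' • m
    have hγ' : γ' • m = 0 := by rw [← e3, hβ]
    -- e4 : γ' • m = β' • m
    have hβ' : β' • m = 0 := by rw [← e4, hγ']
    -- e5 : β' • m = α' • m
    have hα' : α' • m = 0 := by rw [← e5, hβ']
    calc m = (α' + β' + γ') • m := by rw [h2, one_smul]
    _ = α' • m + β' • m + γ' • m := by rw [add_smul, add_smul]
    _ = 0 := by rw [hα', hβ', hγ', add_zero, add_zero]
  exact hab ((key a).trans (key b).symm)
end

section
/- Let R be a ring with 1 and M a nontrivial left R-module (M has at least two elements). There do not exist coefficients α, β, γ, α', β', γ' ∈ R with α + β + γ = 1 and α' + β' + γ' = 1 such that the operations p(x,y,z) = α•x + β•y + γ•z and q(x,y,z) = α'•x + β'•y + γ'•z on M satisfy q(x,x,y) = x and p(x,x,y) = q(x,y,x) = q(y,x,x) = p(x,y,y) = p(x,y,x) for all x,y ∈ M. (Hence the system x ≈ q(x,x,y), p(x,x,y) ≈ q(x,y,x) ≈ q(y,x,x) ≈ p(x,y,y) ≈ p(x,y,x) fails in every full idempotent reduct of a nontrivial module, in particular over every finite ring.) -/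
theorem system_bm_fails_in_modules {R M : Type*} [Ring R] [AddCommGroup M] [Module R M]
    (hM : ∃ a b : M, a ≠ b) :
    ¬ ∃ α β γ α' β' γ' : R,
      α + β + γ = 1 ∧ α' + β' + γ' = 1 ∧
      (∀ x y : M,
        (α' • x + β' • x + γ' • y = x) ∧
        (α • x + β • x + γ • y = α' • x + β' • y + γ' • x) ∧
        (α' • x + β' • y + γ' • x = α' • y + β' • x + γ' • x) ∧
        (α' • y + β' • x + γ' • x = α • x + β • y + γ • y) ∧
        (α • x + β • y + γ • y = α • x + β • y + γ • x)) := by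
  rintro ⟨α, β, γ, α', β', γ', -, -, h⟩
  obtain ⟨a, b, hab⟩ := hM
  -- γ' • y = 0 for all y
  have hγ' : ∀ y : M, γ' • y = 0 := by
    intro y
    have := (h 0 y).1
    simpa using this
  -- β' • y = 0 for all y
  have hβ' : ∀ y : M, β' • y = 0 := by
    intro y
    have := (h 0 y).2.1
    have h5 := (h 0 y).2.2.2.2
    simp only [smul_zero, zero_add, add_zero] at this h5
    -- this : β' •? ...
    -- eq2 at (0,y): γ • y = β' • y ; eq5 at (0,y): γ • y = 0
    have hγ : γ • y = 0 := by
      have : β • y + γ • y = β • y + 0 := by rw [add_zero]; exact h5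
      exact add_left_cancel this
    rw [hγ] at this
    exact this.symm
  -- α' • x = x for all x
  have hα'id : ∀ x : M, α' • x = x := by
    intro x
    have := (h x 0).1
    rw [hβ' x, hγ' (0 : M)] at this
    simpa using this
  -- α' • x = β' • x = 0 for all x (from eq3)
  have hα'0 : ∀ x : M, α' • x = 0 := by
    intro x
    have := (h x 0).2.2.1
    rw [hβ' (0 : M), hβ' x, hγ' x, hα'id x, hα'id (0 : M)] at this
    rw [hα'id x]
    simpa using this
  have ha : a = 0 := by rw [← hα'id a, hα'0 a]
  have hb : b = 0 := by rw [← hα'id b, hα'0 b]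
  exact hab (ha.trans hb.symm)
end

section
/- Let R be a ring with 1 and M a nontrivial left R-module (M has at least two elements). There do not exist coefficients α, β, γ, α', β', γ' ∈ R with α + β + γ = 1 and α' + β' + γ' = 1 such that the operations p(x,y,z) = α•x + β•y + γ•z and q(x,y,z) = α'•x + β'•y + γ'•z on M satisfy p(x,x,y) = p(x,y,y) and p(x,y,x) = q(y,x,x) = q(x,y,x) = q(x,x,y) for all x,y ∈ M. (Hence the system p(x,x,y) ≈ p(x,y,y), p(x,y,x) ≈ q(y,x,x) ≈ q(x,y,x) ≈ q(x,x,y) fails in every full idempotent reduct of a nontrivial module, in particular over every finite ring.) -/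
/-! Specialising the identities to `x = 0` leaves `γ•y = β•y + γ•y`, `β•y = α'•y`,
`α'•y = β'•y` and `β'•y = γ'•y`, so `α'`, `β'`, `γ'` all annihilate `y`; since they sum to `1`,
`y = 0`. Thus the module would be trivial. -/

theorem eq_zero_of_smul_eq_zero_of_add_add_eq_one {R M : Type*} [Semiring R] [AddCommMonoid M]
    [Module R M] {a b c : R} (habc : a + b + c = 1) {y : M} (ha : a • y = 0) (hb : b • y = 0)
    (hc : c • y = 0) : y = 0 := by
  rw [← one_smul R y, ← habc, add_smul, add_smul, ha, hb, hc, add_zero, add_zero]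

theorem subset1_fails_in_modules {R M : Type*} [Ring R] [AddCommGroup M] [Module R M]
    (hM : ∃ a b : M, a ≠ b) :
    ¬ ∃ α β γ α' β' γ' : R,
      α + β + γ = 1 ∧ α' + β' + γ' = 1 ∧
      (∀ x y : M,
        (α • x + β • x + γ • y = α • x + β • y + γ • y) ∧
        (α • x + β • y + γ • x = α' • y + β' • x + γ' • x) ∧
        (α' • y + β' • x + γ' • x = α' • x + β' • y + γ' • x) ∧
        (α' • x + β' • y + γ' • x = α' • x + β' • x + γ' • y)) := by
  rintro ⟨α, β, γ, α', β', γ', -, hsum', h⟩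
  obtain ⟨a, b, hab⟩ := hM
  have eq_zero : ∀ y : M, y = 0 := by
    intro y
    obtain ⟨e1, e2, e3, e4⟩ := h 0 y
    simp only [smul_zero, zero_add, add_zero] at e1 e2 e3 e4
    have hα' : α' • y = 0 := e2.symm.trans (right_eq_add.mp e1)
    have hβ' : β' • y = 0 := e3.symm.trans hα'
    exact eq_zero_of_smul_eq_zero_of_add_add_eq_one hsum' hα' hβ' (e4.symm.trans hβ')
  exact hab ((eq_zero a).trans (eq_zero b).symm)
end

section
/- Consider the system of four identities on two ternary operations p and q: I₁: p(x,x,y) ≈ p(x,y,y); I₂: p(x,y,x) ≈ q(x,x,y); I₃: q(x,x,y) ≈ q(x,y,x); I₄: q(x,y,x) ≈ q(y,x,x). For each i ∈ {1,2,3,4} there exist coefficients α, β, γ, α', β', γ' ∈ ℤ/5ℤ with α + β + γ = 1 and α' + β' + γ' = 1 such that the operations p(x,y,z) = αx + βy + γz and q(x,y,z) = α'x + β'y + γ'z on ℤ/5ℤ satisfy the three identities Iⱼ with j ≠ i for all x,y ∈ ℤ/5ℤ. (This expresses that the system I₁–I₄ is minimal with respect to failing in all full idempotent reducts of modules: every proper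 subsystem is satisfiable in the full idempotent reduct of the module ℤ/5ℤ.) -/
/-- The idempotent affine ternary operation with coefficients `α β γ` on `ZMod 5`. -/
def affOp (α β γ : ZMod 5) (x y z : ZMod 5) : ZMod 5 := α * x + β * y + γ * z

/-- The identities `I₁,…,I₄` of the system, for operations `p = affOp α β γ`
and `q = affOp α' β' γ'`. -/
def identI (α β γ α' β' γ' : ZMod 5) : ℕ → Prop
  | 1 => ∀ x y : ZMod 5, affOp α β γ x x y = affOp α β γ x y y
  | 2 => ∀ x y : ZMod 5, affOp α β γ x y x = affOp α' β' γ' x x y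
  | 3 => ∀ x y : ZMod 5, affOp α' β' γ' x x y = affOp α' β' γ' x y x
  | 4 => ∀ x y : ZMod 5, affOp α' β' γ' x y x = affOp α' β' γ' y x x
  | _ => True

theorem system2_minimal :
    ∀ i ∈ ({1, 2, 3, 4} : Finset ℕ),
      ∃ α β γ α' β' γ' : ZMod 5,
        α + β + γ = 1 ∧ α' + β' + γ' = 1 ∧
        ∀ j ∈ ({1, 2, 3, 4} : Finset ℕ), j ≠ i → identI α β γ α' β' γ' j := by
  intro i hi
  fin_cases hi
  · exact ⟨0, 2, 4, 2, 2, 2, by decide, by decide, by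
      intro j hj hne; fin_cases hj <;> first | exact absurd rfl hne | (simp only [identI]; decide)⟩
  · exact ⟨1, 0, 0, 2, 2, 2, by decide, by decide, by
      intro j hj hne; fin_cases hj <;> first | exact absurd rfl hne | (simp only [identI]; decide)⟩
  · exact ⟨1, 0, 0, 3, 3, 0, by decide, by decide, by
      intro j hj hne; fin_cases hj <;> first | exact absurd rfl hne | (simp only [identI]; decide)⟩
  · exact ⟨1, 0, 0, 1, 0, 0, by decide, by decide, by
      intro j hj hne; fin_cases hj <;> first | exact absurd rfl hne | (simp only [identI]; decide)⟩
end

section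
/- Consider the system of five identities on two ternary operations p and q: J₁: p(x,x,y) ≈ x; J₂: p(x,y,x) ≈ p(y,x,x); J₃: p(y,x,x) ≈ q(y,x,x); J₄: q(y,x,x) ≈ q(x,y,x); J₅: q(x,y,x) ≈ q(x,x,y). For each i ∈ {1,2,3,4,5} there exist coefficients α, β, γ, α', β', γ' ∈ ℤ/5ℤ with α + β + γ = 1 and α' + β' + γ' = 1 such that the operations p(x,y,z) = αx + βy + γz and q(x,y,z) = α'x + β'y + γ'z on ℤ/5ℤ satisfy the four identities Jⱼ with j ≠ i for all x,y ∈ ℤ/5ℤ. (This expresses that the system J₁–J₅ is minimal with respect to failing in all full idempotent reducts of modules: every proper subsystem is satisfiable in the full idempotent reduct of a module over a finite ring.) -/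
/-- The identities `J₁,…,J₅` of the system, for operations `p = affOp α β γ`
and `q = affOp α' β' γ'`. -/
def identJ (α β γ α' β' γ' : ZMod 5) : ℕ → Prop
  | 1 => ∀ x y : ZMod 5, affOp α β γ x x y = x
  | 2 => ∀ x y : ZMod 5, affOp α β γ x y x = affOp α β γ y x x
  | 3 => ∀ x y : ZMod 5, affOp α β γ y x x = affOp α' β' γ' y x x
  | 4 => ∀ x y : ZMod 5, affOp α' β' γ' y x x = affOp α' β' γ' x y x
  | 5 => ∀ x y : ZMod 5, affOp α' β' γ' x y x = affOp α' β' γ' x x y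
  | _ => True

theorem system3_minimal :
    ∀ i ∈ ({1, 2, 3, 4, 5} : Finset ℕ),
      ∃ α β γ α' β' γ' : ZMod 5,
        α + β + γ = 1 ∧ α' + β' + γ' = 1 ∧
        ∀ j ∈ ({1, 2, 3, 4, 5} : Finset ℕ), j ≠ i → identJ α β γ α' β' γ' j := by
  intro i hi
  fin_cases hi
  · exact ⟨2, 2, 2, 2, 2, 2, by decide, by decide, by
      intro j hj hne; fin_cases hj <;> simp only [identJ] <;> first | decide | simp at hne⟩
  · exact ⟨2, 4, 0, 2, 2, 2, by decide, by decide, by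
      intro j hj hne; fin_cases hj <;> simp only [identJ] <;> first | decide | simp at hne⟩
  · exact ⟨3, 3, 0, 2, 2, 2, by decide, by decide, by
      intro j hj hne; fin_cases hj <;> simp only [identJ] <;> first | decide | simp at hne⟩
  · exact ⟨3, 3, 0, 3, 4, 4, by decide, by decide, by
      intro j hj hne; fin_cases hj <;> simp only [identJ] <;> first | decide | simp at hne⟩
  · exact ⟨3, 3, 0, 3, 3, 0, by decide, by decide, by
      intro j hj hne; fin_cases hj <;> simp only [identJ] <;> first | decide | simp at hne⟩
end

section
/- In ℤ/5ℤ, the idempotent affine operations p(x,y,z) = 4x + y + z and q(x,y,z) = 2x + 2y + 2z satisfy p(x,x,y) = p(x,y,x) and p(x,y,y) = q(y,x,x) = q(x,y,x) = q(x,x,y) for all x,y ∈ ℤ/5ℤ. (Hence the system of identities p(x,x,y) ≈ p(x,y,x), p(x,y,y) ≈ q(y,x,x) ≈ q(x,y,x) ≈ q(x,x,y) holds in the full idempotent reduct of a module over ℤ/5ℤ, so this system does not describe omitting the unary and affine types.) -/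
theorem subset2_holds_in_Z5 :
    ∀ x y : ZMod 5,
      ((4 : ZMod 5) * x + x + y = 4 * x + y + x) ∧
      ((4 : ZMod 5) * x + y + y = 2 * y + 2 * x + 2 * x) ∧
      ((2 : ZMod 5) * y + 2 * x + 2 * x = 2 * x + 2 * y + 2 * x) ∧
      ((2 : ZMod 5) * x + 2 * y + 2 * x = 2 * x + 2 * x + 2 * y) := by
  decide
end
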